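/- arXiv:1805.01255 — 5 statements merged into one kernel-verified Lean document; each statement's English description precedes it below -/
import Mathlib

section
/- Let P be a countable index set, M = (m_{ij}) a 0-1 matrix indexed by P, and λ > 1. Suppose v = (v_i) is a positive sequence satisfying Σ_j m_{ij} v_j ≤ λ v_i for all i, and suppose that for some i ∈ P and some n ∈ ℕ the n-th matrix power satisfies m_{ij}(n) ≥ 1 for all j ∈ P. Then v is summable, i.e. Σ_j v_j < ∞, and moreover Σ_j v_j ≤ λ^n v_i. -/
open scoped ENNReal Classical

/-- Powers of a countably-indexed nonnegative matrix, with sums in `ℝ≥0∞`. -/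
noncomputable def matPow {P : Type*} (m : P → P → ℝ≥0∞) : ℕ → P → P → ℝ≥0∞
  | 0 => fun i j => if i = j then 1 else 0
  | (n + 1) => fun i j => ∑' k, m i k * matPow m n k j

theorem matPow_key {P : Type*} (m : P → P → ℝ≥0∞) (lam : ℝ≥0∞) (v : P → ℝ≥0∞)
    (hsub : ∀ i, ∑' j, m i j * v j ≤ lam * v i) :
    ∀ n i, ∑' j, matPow m n i j * v j ≤ lam ^ n * v i := by
  intro n
  induction n with
  | zero =>
    intro i
    have : ∑' j, matPow m 0 i j * v j = v i := by
      rw [tsum_eq_single i]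
      · simp [matPow]
      · intro b hb
        simp [matPow, (Ne.symm hb)]
    simp [this]
  | succ n ih =>
    intro i
    have heq : ∑' j, matPow m (n + 1) i j * v j
        = ∑' k, m i k * ∑' j, matPow m n k j * v j := by
      simp only [matPow]
      calc ∑' j, (∑' k, m i k * matPow m n k j) * v j
          = ∑' j, ∑' k, m i k * matPow m n k j * v j := by
            congr 1; funext j; rw [ENNReal.tsum_mul_right]
        _ = ∑' k, ∑' j, m i k * matPow m n k j * v j := ENNReal.tsum_comm
        _ = ∑' k, m i k * ∑' j, matPow m n k j * v j := by
            congr 1; funext k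
            rw [← ENNReal.tsum_mul_left]
            congr 1; funext j; ring
    rw [heq]
    calc ∑' k, m i k * ∑' j, matPow m n k j * v j
        ≤ ∑' k, m i k * (lam ^ n * v k) :=
          ENNReal.tsum_le_tsum fun k => mul_le_mul_right (ih k) _
      _ = lam ^ n * ∑' k, m i k * v k := by
          rw [← ENNReal.tsum_mul_left]
          congr 1; funext k; ring
      _ ≤ lam ^ n * (lam * v i) := mul_le_mul_right (hsub i) _
      _ = lam ^ (n + 1) * v i := by ring

/-- If `v` is a positive `λ`-subeigenvector of a 0-1 matrix `M` and some power of `M`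
has all entries of row `i` at least `1`, then `v` is summable and `∑ v ≤ λ^n v_i`. -/
theorem stmt0 {P : Type*} [Countable P] (m : P → P → ℝ≥0∞)
    (h01 : ∀ i j, m i j = 0 ∨ m i j = 1)
    (lam : ℝ≥0∞) (hlam1 : 1 < lam) (hlamtop : lam ≠ ⊤)
    (v : P → ℝ≥0∞) (hvpos : ∀ i, 0 < v i) (hvfin : ∀ i, v i ≠ ⊤)
    (hsub : ∀ i, ∑' j, m i j * v j ≤ lam * v i)
    (i : P) (n : ℕ) (hrow : ∀ j, 1 ≤ matPow m n i j) :
    (∑' j, v j) ≤ lam ^ n * v i ∧ (∑' j, v j) ≠ ⊤ := by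
  have hle : (∑' j, v j) ≤ lam ^ n * v i := by
    calc (∑' j, v j) ≤ ∑' j, matPow m n i j * v j := by
          refine ENNReal.tsum_le_tsum fun j => ?_
          calc v j = 1 * v j := (one_mul _).symm
            _ ≤ matPow m n i j * v j := mul_le_mul_left (hrow j) _
      _ ≤ lam ^ n * v i := matPow_key m lam v hsub n i
  refine ⟨hle, ?_⟩
  exact ne_top_of_le_ne_top (ENNReal.mul_ne_top (ENNReal.pow_ne_top hlamtop) (hvfin i)) hle
end

section
/- Let P be countable, M a 0-1 matrix over P, λ > 1, v a positive summable λ-subeigenvector with λ_i = λ for all but finitely many i ∈ P. Let (i_n)_{n≥0} be an admissible infinite sequence in which every symbol of P occurs only finitely often. Then Δ(i_0⋯i_n) = v_{i_n}/∏_{ℓ=0}^{n-1} λ_{i_ℓ} tends to 0 as n → ∞. -/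
open Filter

noncomputable def wordWeight {P : Type*} (v lam : P → ℝ) (w : ℕ → P) (n : ℕ) : ℝ :=
  v (w n) / ∏ ℓ ∈ Finset.range n, lam (w ℓ)

/-- If `v` is deficient in only finitely many coordinates and every symbol occurs
only finitely often in the infinite admissible sequence `(iₙ)`, then
`Δ(i₀⋯iₙ) → 0`. -/
theorem stmt5 {P : Type*} [Countable P] (m : P → P → ℝ)
    (h01 : ∀ i j, m i j = 0 ∨ m i j = 1)
    (lam : ℝ) (hlam : 1 < lam)
    (v lamv : P → ℝ) (hvpos : ∀ i, 0 < v i) (hlampos : ∀ i, 0 < lamv i)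
    (hrow : ∀ i, HasSum (fun j => m i j * v j) (lamv i * v i))
    (hle : ∀ i, lamv i ≤ lam)
    (hnorm : HasSum v 1)
    (hdef : {i : P | lamv i < lam}.Finite)
    (w : ℕ → P) (hadm : ∀ k, m (w k) (w (k + 1)) = 1)
    (hfin : ∀ p : P, {n : ℕ | w n = p}.Finite) :
    Tendsto (fun n => wordWeight v lamv w n) atTop (nhds 0) := by
  -- the set of times at which a deficient symbol occurs is finite
  have hF : {n : ℕ | lamv (w n) < lam}.Finite := by
    have hsub : {n : ℕ | lamv (w n) < lam} ⊆
        ⋃ p ∈ {i : P | lamv i < lam}, {n : ℕ | w n = p} := by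
      intro n hn
      exact Set.mem_biUnion hn rfl
    exact (hdef.biUnion (fun p _ => hfin p)).subset hsub
  obtain ⟨N, hN⟩ : ∃ N : ℕ, ∀ n ≥ N, lamv (w n) = lam := by
    obtain ⟨N, hN⟩ := hF.bddAbove
    refine ⟨N + 1, fun n hn => le_antisymm (hle _) ?_⟩
    by_contra h
    have hmem : n ∈ {n : ℕ | lamv (w n) < lam} := lt_of_not_ge h
    have := hN hmem
    omega
  set C : ℝ := ∏ ℓ ∈ Finset.range N, lamv (w ℓ) with hC
  have hCpos : 0 < C := Finset.prod_pos (fun i _ => hlampos _)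
  have hprodpos : ∀ n, 0 < ∏ ℓ ∈ Finset.range n, lamv (w ℓ) :=
    fun n => Finset.prod_pos (fun i _ => hlampos _)
  -- the product tends to infinity
  have hprod : Tendsto (fun n => ∏ ℓ ∈ Finset.range n, lamv (w ℓ)) atTop atTop := by
    have heq : ∀ n ≥ N, ∏ ℓ ∈ Finset.range n, lamv (w ℓ) = C * lam ^ (n - N) := by
      intro n hn
      have hsplit : n = N + (n - N) := by omega
      rw [hsplit, Finset.prod_range_add]
      congr 1
      rw [Nat.add_sub_cancel_left,
        Finset.prod_congr rfl (fun i _ => hN (N + i) (by omega)),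
        Finset.prod_const, Finset.card_range]
    have h1 : Tendsto (fun n : ℕ => lam ^ n) atTop atTop :=
      tendsto_pow_atTop_atTop_of_one_lt hlam
    have h2 : Tendsto (fun n : ℕ => n - N) atTop atTop :=
      tendsto_sub_atTop_nat N
    have h3 : Tendsto (fun n : ℕ => C * lam ^ (n - N)) atTop atTop :=
      (h1.comp h2).const_mul_atTop hCpos
    refine h3.congr' ?_
    filter_upwards [eventually_ge_atTop N] with n hn
    exact (heq n hn).symm
  have hinv : Tendsto (fun n => (∏ ℓ ∈ Finset.range n, lamv (w ℓ))⁻¹) atTop (nhds 0) :=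
    hprod.inv_tendsto_atTop
  -- squeeze
  refine squeeze_zero (fun n => ?_) (fun n => ?_) hinv
  · exact div_nonneg (hvpos _).le (hprodpos n).le
  · have hv1 : v (w n) ≤ 1 := le_hasSum hnorm (w n) (fun j _ => (hvpos j).le)
    calc wordWeight v lamv w n
        ≤ 1 / ∏ ℓ ∈ Finset.range n, lamv (w ℓ) := by
          unfold wordWeight
          gcongr
          exact (hprodpos n).le
      _ = (∏ ℓ ∈ Finset.range n, lamv (w ℓ))⁻¹ := one_div _
end

section
/- With the notation of the previous statement, for each n ≥ 1 the set G_n = {r ∈ R : π_r(x_i) ≠ π_r(x_j) for all 1 ≤ i < j ≤ n} is open and dense in R (with the supremum metric / product topology), and consequently there exists r ∈ R such that π_r : X → ℝ is injective. -/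
/-- The compact product space `R = ∏_{k} [0, 1/2^(k+1)]`. -/
abbrev RSpace : Type := (k : ℕ) → Set.Icc (0 : ℝ) (1 / 2 ^ (k + 1))

/-- `π_r(x) = ∑_k r_k · m(x, x_k)`. -/
noncomputable def piMap {X : Type*} [MetricSpace X] (e : ℕ → X) (r : RSpace) (a : X) : ℝ :=
  ∑' k, (r k : ℝ) * dist a (e k)

/-!
Each `π_r(x)` is a uniformly convergent series, so `r ↦ π_r(x)` is continuous and the set of `r`
separating two given points is open. It is also dense: if `π_r(x_i) = π_r(x_j)`, moving only the
coordinate `r_j` changes `π_r(x_i) - π_r(x_j)` by `(t - r_j) · m(x_i, x_j)`, which vanishes only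
at `t = r_j`. Baire's theorem in the compact space `R` then makes the intersection over all pairs
of points dense, in particular nonempty.
-/

open Filter Topology

lemma Set.Icc.nhdsNE_neBot {a b : ℝ} (hab : a < b) (x : Set.Icc a b) : (𝓝[≠] x).NeBot :=
  have : Nontrivial (Set.Icc a b) :=
    ⟨⟨⟨a, le_rfl, hab.le⟩, ⟨b, hab.le, le_rfl⟩, fun h => hab.ne (congrArg Subtype.val h)⟩⟩
  inferInstance

lemma summable_one_div_two_pow_succ : Summable fun k : ℕ => (1 : ℝ) / 2 ^ (k + 1) :=
  (summable_geometric_two' 1).congr fun k => by rw [pow_succ]; ring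

instance : Nonempty RSpace := ⟨fun _ => ⟨0, le_rfl, by positivity⟩⟩

section

variable {X : Type*} [MetricSpace X] (e : ℕ → X)

lemma abs_piMap_term_le (hdiam : ∀ a b : X, dist a b ≤ 1) (r : RSpace) (a : X) (k : ℕ) :
    |(r k : ℝ) * dist a (e k)| ≤ 1 / 2 ^ (k + 1) := by
  rw [abs_of_nonneg (mul_nonneg (r k).2.1 dist_nonneg)]
  simpa using mul_le_mul (r k).2.2 (hdiam a (e k)) dist_nonneg (by positivity)

lemma summable_piMap_term (hdiam : ∀ a b : X, dist a b ≤ 1) (r : RSpace) (a : X) :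
    Summable fun k => (r k : ℝ) * dist a (e k) :=
  summable_one_div_two_pow_succ.of_norm_bounded (abs_piMap_term_le e hdiam r a)

lemma continuous_piMap (hdiam : ∀ a b : X, dist a b ≤ 1) (a : X) :
    Continuous fun r : RSpace => piMap e r a :=
  continuous_tsum (fun k => (continuous_subtype_val.comp (continuous_apply k)).mul continuous_const)
    summable_one_div_two_pow_succ (fun k r => abs_piMap_term_le e hdiam r a k)

lemma piMap_update (hdiam : ∀ a b : X, dist a b ≤ 1) (r : RSpace) (j : ℕ)
    (t : Set.Icc (0 : ℝ) (1 / 2 ^ (j + 1))) (a : X) :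
    piMap e (Function.update r j t) a = piMap e r a + ((t : ℝ) - r j) * dist a (e j) := by
  have hrest : (∑' k, if k = j then 0 else (Function.update r j t k : ℝ) * dist a (e k)) =
      ∑' k, if k = j then 0 else (r k : ℝ) * dist a (e k) :=
    tsum_congr fun k => by by_cases hk : k = j <;> simp [hk]
  rw [piMap, piMap, (summable_piMap_term e hdiam _ a).tsum_eq_add_tsum_ite j,
    (summable_piMap_term e hdiam r a).tsum_eq_add_tsum_ite j, hrest, Function.update_self]
  ring

def separatingSet (i j : ℕ) : Set RSpace := {r | piMap e r (e i) ≠ piMap e r (e j)}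

lemma isOpen_separatingSet (hdiam : ∀ a b : X, dist a b ≤ 1) (i j : ℕ) :
    IsOpen (separatingSet e i j) :=
  isOpen_ne_fun (continuous_piMap e hdiam (e i)) (continuous_piMap e hdiam (e j))

lemma dense_separatingSet (hinj : Function.Injective e) (hdiam : ∀ a b : X, dist a b ≤ 1)
    {i j : ℕ} (hij : i ≠ j) : Dense (separatingSet e i j) := by
  intro r
  by_cases hr : r ∈ separatingSet e i j
  · exact subset_closure hr
  have hr : piMap e r (e i) = piMap e r (e j) := not_not.1 hr
  have := Set.Icc.nhdsNE_neBot (by positivity : (0 : ℝ) < 1 / 2 ^ (j + 1)) (r j)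
  have hcont : Continuous fun t : Set.Icc (0 : ℝ) (1 / 2 ^ (j + 1)) => Function.update r j t :=
    continuous_const.update j continuous_id
  have hline : Tendsto (fun t => Function.update r j t) (𝓝[≠] (r j)) (𝓝 r) := by
    simpa using (hcont.tendsto (r j)).mono_left nhdsWithin_le_nhds
  refine mem_closure_of_tendsto hline (eventually_nhdsWithin_of_forall fun t ht heq => ?_)
  have hdist : dist (e i) (e j) ≠ 0 := dist_ne_zero.2 (hinj.ne hij)
  have ht : (t : ℝ) - r j ≠ 0 := sub_ne_zero.2 fun h => ht (Subtype.ext h)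
  rw [piMap_update e hdiam, piMap_update e hdiam, hr, dist_self, mul_zero, add_zero,
    add_eq_left] at heq
  exact mul_ne_zero ht hdist heq

lemma dense_biInter_separatingSet (hinj : Function.Injective e)
    (hdiam : ∀ a b : X, dist a b ≤ 1) {S : Set (ℕ × ℕ)} (hS : S.Countable)
    (hne : ∀ p ∈ S, p.1 ≠ p.2) : Dense (⋂ p ∈ S, separatingSet e p.1 p.2) :=
  dense_biInter_of_isOpen (fun p _ => isOpen_separatingSet e hdiam p.1 p.2) hS
    fun p hp => dense_separatingSet e hinj hdiam (hne p hp)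

end

theorem stmt7_general {X : Type*} [MetricSpace X]
    (e : ℕ → X) (hbij : Function.Bijective e)
    (hdiam : ∀ a b : X, dist a b ≤ 1) :
    (∀ n : ℕ,
      IsOpen {r : RSpace | ∀ i j, 1 ≤ i → i < j → j ≤ n → piMap e r (e i) ≠ piMap e r (e j)} ∧
      Dense {r : RSpace | ∀ i j, 1 ≤ i → i < j → j ≤ n → piMap e r (e i) ≠ piMap e r (e j)})
      ∧ ∃ r : RSpace, Function.Injective (piMap e r) := by
  refine ⟨fun n => ?_, ?_⟩
  · set P : Set (ℕ × ℕ) := {p | 1 ≤ p.1 ∧ p.1 < p.2 ∧ p.2 ≤ n}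
    have hG : {r : RSpace | ∀ i j, 1 ≤ i → i < j → j ≤ n → piMap e r (e i) ≠ piMap e r (e j)} =
        ⋂ p ∈ P, separatingSet e p.1 p.2 := by
      ext r
      simp [P, separatingSet]
    have hP : P.Finite :=
      ((Set.finite_Iic n).prod (Set.finite_Iic n)).subset fun p hp =>
        ⟨hp.2.1.le.trans hp.2.2, hp.2.2⟩
    rw [hG]
    exact ⟨hP.isOpen_biInter fun p _ => isOpen_separatingSet e hdiam p.1 p.2,
      dense_biInter_separatingSet e hbij.1 hdiam hP.countable fun p hp => hp.2.1.ne⟩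
  · obtain ⟨r, hr⟩ := (dense_biInter_separatingSet e hbij.1 hdiam (Set.to_countable
      {p : ℕ × ℕ | p.1 ≠ p.2}) fun _ hp => hp).nonempty
    refine ⟨r, fun a b hab => ?_⟩
    obtain ⟨i, rfl⟩ := hbij.2 a
    obtain ⟨j, rfl⟩ := hbij.2 b
    by_contra hne
    exact Set.mem_iInter₂.1 hr (i, j) (fun h => hne (congrArg e h)) hab

/-- Each set `G_n = {r ∈ R : π_r(x_i) ≠ π_r(x_j) for i < j ≤ n}` is open and dense
in `R`, and consequently there is `r ∈ R` with `π_r` injective. -/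
theorem stmt7 {X : Type*} [MetricSpace X] [Countable X]
    (e : ℕ → X) (hbij : Function.Bijective e)
    (hdiam : ∀ a b : X, dist a b ≤ 1) :
    (∀ n : ℕ,
      IsOpen {r : RSpace | ∀ i j, 1 ≤ i → i < j → j ≤ n → piMap e r (e i) ≠ piMap e r (e j)} ∧
      Dense {r : RSpace | ∀ i j, 1 ≤ i → i < j → j ≤ n → piMap e r (e i) ≠ piMap e r (e j)})
      ∧ ∃ r : RSpace, Function.Injective (piMap e r) :=
  stmt7_general e hbij hdiam
end

section
/- Let X be a compact metric space with metric d and f : X → X Lipschitz with constant L = Lip_d(f). Then the topological entropy satisfies h_top(f) ≤ HD_d(X) · max(log L, 0), where HD_d(X) denotes the Hausdorff dimension of (X, d). -/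
open Dynamics
open scoped NNReal ENNReal

/-!
Fix `s > dimH X` and a scale `ε`. Since `μH[s] X = 0`, compactness gives a finite cover of `X` by
open sets `u i` of diameter at most `d i ≤ ε` with `∑ (d i / ε) ^ s ≤ 1`. For a `K`-Lipschitz map
with `K > 1`, orbits starting in `u i` stay `ε`-close for `m i` steps, where `ε < K ^ m i * d i`,
so `(K ^ s) ^ (-m i) ≤ (d i / ε) ^ s`. A set that is `ε`-separated up to time `n` meets `u i` in a
set that `f^[m i]` maps injectively onto a set separated up to time `n - m i`; since the weights
`(K ^ s) ^ (-m i)` sum to at most one, induction on `n` bounds its size by `C (K ^ s) ^ n`, and the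
entropy is at most `s log K`. For `K ≤ 1` a single finite cover by `ε`-small sets works at every
time, so the entropy vanishes.
-/

open Set

namespace Dynamics

variable {X : Type*} {T : X → X} {U : SetRel X X} {m n : ℕ} {x y : X}

/-- Unlike `IsDynNetIn` (pairwise disjoint dynamical balls), separation passes from `s` to its
image under `T^[m]` at time `n - m`, which drives the counting induction. -/
def IsDynSeparated (T : X → X) (U : SetRel X X) (n : ℕ) (s : Set X) : Prop :=
  s.Pairwise fun x y => (x, y) ∉ dynEntourage T U n

lemma IsDynSeparated.mono {s t : Set X} (h : IsDynSeparated T U n t) (hst : s ⊆ t) :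
    IsDynSeparated T U n s :=
  Set.Pairwise.mono hst h

lemma IsDynNetIn.isDynSeparated [U.IsRefl] {F s : Set X} (h : IsDynNetIn T F U n s) :
    IsDynSeparated T U n s := fun _ hx y hy hxy hxy_mem =>
  hxy (h.2.elim_set hx hy y hxy_mem (SetRel.rfl (dynEntourage T U n)))

lemma IsDynSeparated.card_le_one_of_prod_subset {s : Finset X} (hs : IsDynSeparated T U n s)
    (hclose : (s : Set X) ×ˢ s ⊆ dynEntourage T U n) : s.card ≤ 1 :=
  Finset.card_le_one.2 fun _ hx _ hy => by_contra fun hxy => hs hx hy hxy (hclose ⟨hx, hy⟩)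

lemma mem_dynEntourage_of_iterate (h : (x, y) ∈ dynEntourage T U m)
    (h' : (T^[m] x, T^[m] y) ∈ dynEntourage T U (n - m)) : (x, y) ∈ dynEntourage T U n := by
  rw [mem_dynEntourage] at h h' ⊢
  intro k hk
  rcases lt_or_ge k m with hkm | hmk
  · exact h k hkm
  · obtain ⟨j, rfl⟩ := Nat.exists_eq_add_of_le' hmk
    simpa only [Function.iterate_add_apply] using h' j (by omega)

lemma IsDynSeparated.exists_card_eq_of_prod_subset [U.IsRefl] {s : Finset X}
    (hs : IsDynSeparated T U n s) (hclose : (s : Set X) ×ˢ s ⊆ dynEntourage T U m) :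
    ∃ t : Finset X, IsDynSeparated T U (n - m) t ∧ t.card = s.card := by
  classical
  have key : ∀ x ∈ s, ∀ y ∈ s, x ≠ y → (T^[m] x, T^[m] y) ∉ dynEntourage T U (n - m) :=
    fun x hx y hy hxy h => hs hx hy hxy (mem_dynEntourage_of_iterate (hclose ⟨hx, hy⟩) h)
  refine ⟨s.image T^[m], ?_, Finset.card_image_of_injOn fun x hx y hy hxy => ?_⟩
  · rw [Finset.coe_image]
    rintro _ ⟨x, hx, rfl⟩ _ ⟨y, hy, rfl⟩ hne
    exact key x hx y hy fun h => hne (h ▸ rfl)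
  · by_contra hne
    exact key x hx y hy hne (hxy ▸ SetRel.rfl (dynEntourage T U (n - m)))

lemma _root_.Finset.card_le_sum_card_filter_of_subset_iUnion {ι : Type*} [DecidableEq X]
    (s : Finset X) (I : Finset ι) (u : ι → Set X) [∀ i, DecidablePred (· ∈ u i)]
    (hcover : (s : Set X) ⊆ ⋃ i ∈ I, u i) : s.card ≤ ∑ i ∈ I, (s.filter (· ∈ u i)).card := by
  refine le_trans (Finset.card_le_card fun x hx => ?_) Finset.card_biUnion_le
  obtain ⟨i, hi, hxi⟩ := Set.mem_iUnion₂.1 (hcover hx)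
  exact Finset.mem_biUnion.2 ⟨i, hi, Finset.mem_filter.2 ⟨hx, hxi⟩⟩

theorem IsDynSeparated.card_le_pow [U.IsRefl] {ι : Type*} {I : Finset ι} {u : ι → Set X}
    {m : ι → ℕ} {ρ : ℝ≥0} (hρ : 1 ≤ ρ) (hcover : univ ⊆ ⋃ i ∈ I, u i)
    (hsmall : ∀ i ∈ I, u i ×ˢ u i ⊆ dynEntourage T U (m i)) (hm : ∀ i ∈ I, 0 < m i)
    (hweight : ∑ i ∈ I, (ρ ^ m i)⁻¹ ≤ 1) {s : Finset X} (hs : IsDynSeparated T U n s) :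
    (s.card : ℝ≥0) ≤ ρ ^ (n + I.sup m) := by
  classical
  induction n using Nat.strong_induction_on generalizing s with
  | _ n ih =>
  set M := I.sup m
  have hterm : ∀ i ∈ I, ((s.filter (· ∈ u i)).card : ℝ≥0) ≤ ρ ^ (n + M) * (ρ ^ m i)⁻¹ := by
    intro i hi
    have hsi := hs.mono (Finset.filter_subset (· ∈ u i) s)
    have hsub : (↑(s.filter (· ∈ u i)) : Set X) ⊆ u i := fun _ hx => (Finset.mem_filter.1 hx).2
    have hclose := (prod_mono hsub hsub).trans (hsmall i hi)
    rw [← pow_sub₀ ρ (by positivity) (le_add_left (Finset.le_sup hi))]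
    rcases le_or_gt n (m i) with hn | hn
    · calc ((s.filter (· ∈ u i)).card : ℝ≥0) ≤ 1 := by
            exact_mod_cast hsi.card_le_one_of_prod_subset
              (hclose.trans (dynEntourage_antitone T U hn))
        _ ≤ ρ ^ (n + M - m i) := one_le_pow₀ hρ
    · obtain ⟨t, ht, hcard⟩ := hsi.exists_card_eq_of_prod_subset hclose
      calc ((s.filter (· ∈ u i)).card : ℝ≥0) = t.card := by rw [hcard]
        _ ≤ ρ ^ (n - m i + M) := ih _ (by have := hm i hi; omega) ht
        _ = ρ ^ (n + M - m i) := by congr 1; have := Finset.le_sup (f := m) hi; omega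
  calc (s.card : ℝ≥0) ≤ ∑ i ∈ I, ((s.filter (· ∈ u i)).card : ℝ≥0) := by
        exact_mod_cast
          s.card_le_sum_card_filter_of_subset_iUnion I u ((subset_univ _).trans hcover)
    _ ≤ ∑ i ∈ I, ρ ^ (n + M) * (ρ ^ m i)⁻¹ := Finset.sum_le_sum hterm
    _ = ρ ^ (n + M) * ∑ i ∈ I, (ρ ^ m i)⁻¹ := (Finset.mul_sum _ _ _).symm
    _ ≤ ρ ^ (n + M) := mul_le_of_le_one_right' hweight

theorem IsDynSeparated.card_le_card_of_cover {ι : Type*} {I : Finset ι}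
    {u : ι → Set X} (hcover : univ ⊆ ⋃ i ∈ I, u i)
    (hsmall : ∀ i ∈ I, u i ×ˢ u i ⊆ dynEntourage T U n) {s : Finset X}
    (hs : IsDynSeparated T U n s) : s.card ≤ I.card := by
  classical
  calc s.card ≤ ∑ i ∈ I, (s.filter (· ∈ u i)).card :=
        s.card_le_sum_card_filter_of_subset_iUnion I u ((subset_univ _).trans hcover)
    _ ≤ ∑ _i ∈ I, 1 := Finset.sum_le_sum fun i hi => by
        have hsub : (↑(s.filter (· ∈ u i)) : Set X) ⊆ u i := fun _ hx => (Finset.mem_filter.1 hx).2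
        exact (hs.mono (Finset.filter_subset (· ∈ u i) s)).card_le_one_of_prod_subset
          ((prod_mono hsub hsub).trans (hsmall i hi))
    _ = I.card := by simp

lemma netEntropyEntourage_le_log_of_card_le [U.IsRefl] {C ρ : ℝ≥0} (hρ : ρ ≠ 0)
    (h : ∀ n (s : Finset X), IsDynSeparated T U n s → (s.card : ℝ≥0) ≤ C * ρ ^ n) :
    netEntropyEntourage T univ U ≤ Real.log ρ := by
  have hmax : ∀ n, (netMaxcard T univ U n : ℝ≥0∞) ≤ C * (ρ : ℝ≥0∞) ^ n := by
    intro n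
    rw [netMaxcard, ENat.toENNReal_iSup]
    refine iSup_le fun s => ?_
    rw [ENat.toENNReal_iSup]
    refine iSup_le fun hs => ?_
    rw [ENat.toENNReal_coe, ← ENNReal.coe_natCast]
    exact_mod_cast h n s hs.isDynSeparated
  calc netEntropyEntourage T univ U
      ≤ ExpGrowth.expGrowthSup fun n => (ρ : ℝ≥0∞) ^ n :=
        ExpGrowth.expGrowthSup_le_of_eventually_le ENNReal.coe_ne_top (.of_forall hmax)
    _ = Real.log ρ := by rw [ExpGrowth.expGrowthSup_pow, ENNReal.log_of_nnreal hρ]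

end Dynamics

open scoped Topology
open Filter Metric MeasureTheory

lemma exists_iUnion_tsum_ediam_rpow_lt {X : Type*} [EMetricSpace X] [MeasurableSpace X]
    [BorelSpace X] {s : ℝ} (hs : 0 < s) {A : Set X} (h : μH[s] A = 0) {r b : ℝ≥0∞}
    (hr : 0 < r) (hb : 0 < b) :
    ∃ t : ℕ → Set X, A ⊆ ⋃ n, t n ∧ (∀ n, ediam (t n) ≤ r) ∧ ∑' n, ediam (t n) ^ s < b := by
  simp only [Measure.hausdorffMeasure_apply, ENNReal.iSup_eq_zero] at h
  have hlt := (h r hr).le.trans_lt hb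
  simp only [iInf_lt_iff] at hlt
  obtain ⟨t, hcover, hdiam, hsum⟩ := hlt
  refine ⟨t, hcover, hdiam, lt_of_le_of_lt (ENNReal.tsum_le_tsum fun n => ?_) hsum⟩
  rcases (t n).eq_empty_or_nonempty with hn | hn
  · simp [hn, ENNReal.zero_rpow_of_pos hs]
  · exact le_iSup_of_le hn le_rfl

lemma exists_finite_isOpen_cover_sum_rpow_le {X : Type*} [EMetricSpace X] [MeasurableSpace X]
    [BorelSpace X] {s : ℝ} (hs : 0 < s) {A : Set X} (hA : IsCompact A) (h : μH[s] A = 0)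
    {ε b : ℝ≥0} (hε : 0 < ε) (hb : 0 < b) :
    ∃ (I : Finset ℕ) (u : ℕ → Set X) (d : ℕ → ℝ≥0), A ⊆ ⋃ i ∈ I, u i ∧
      (∀ i, ediam (u i) ≤ d i ∧ 0 < d i ∧ d i ≤ ε) ∧ ∑ i ∈ I, d i ^ s ≤ b := by
  obtain ⟨t, hcover, hdiam, hsum⟩ := exists_iUnion_tsum_ediam_rpow_lt hs h
    (ENNReal.coe_pos.2 (half_pos hε)) (ENNReal.coe_pos.2 (half_pos hb))
  obtain ⟨e, he, hesum⟩ := ENNReal.exists_pos_sum_of_countable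
    (ENNReal.coe_ne_zero.2 (half_pos hb).ne') ℕ
  set a : ℕ → ℝ≥0 := fun i => (ediam (t i)).toNNReal
  have ha (i : ℕ) : ediam (t i) = a i :=
    (ENNReal.coe_toNNReal (ne_top_of_le_ne_top ENNReal.coe_ne_top (hdiam i))).symm
  -- Thickening `t i` by `η` makes it open at a cost of at most `e i` in `ediam ^ s`.
  have hthick (i : ℕ) : ∀ᶠ η : ℝ≥0 in 𝓝[>] 0,
      0 < η ∧ η ≤ ε / 4 ∧ (a i + 2 * η) ^ s < a i ^ s + e i := by
    have hcont : Tendsto (fun η : ℝ≥0 => (a i + 2 * η) ^ s) (𝓝 0) (𝓝 (a i ^ s)) := by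
      have : Continuous fun η : ℝ≥0 => (a i + 2 * η) ^ s :=
        (NNReal.continuous_rpow_const hs.le).comp (by fun_prop)
      simpa using this.tendsto 0
    refine eventually_mem_nhdsWithin.and
      (((eventually_le_nhds ?_).filter_mono nhdsWithin_le_nhds).and
        ((hcont.eventually_lt_const ?_).filter_mono nhdsWithin_le_nhds))
    · positivity
    · exact lt_add_of_pos_right _ (he i)
  choose η hη using fun i => (hthick i).exists
  obtain ⟨I, hI⟩ := hA.elim_finite_subcover (fun i => thickening (η i) (t i))
    (fun i => isOpen_thickening) (hcover.trans (iUnion_mono fun i =>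
      self_subset_thickening (by exact_mod_cast (hη i).1) _))
  refine ⟨I, fun i => thickening (η i) (t i), fun i => a i + 2 * η i, hI,
    fun i => ⟨?_, ?_, ?_⟩, ?_⟩
  · simpa [ha] using ediam_thickening_le (s := t i) (η i)
  · exact add_pos_of_nonneg_of_pos zero_le (mul_pos two_pos (hη i).1)
  · have : a i ≤ ε / 2 := by exact_mod_cast (ha i) ▸ hdiam i
    calc a i + 2 * η i ≤ ε / 2 + 2 * (ε / 4) := by gcongr; exact (hη i).2.1
      _ = ε := by rw [← NNReal.coe_inj]; push_cast; ring
  · rw [← ENNReal.coe_le_coe]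
    calc ((∑ i ∈ I, (a i + 2 * η i) ^ s : ℝ≥0) : ℝ≥0∞)
        ≤ ∑ i ∈ I, ((a i ^ s + e i : ℝ≥0) : ℝ≥0∞) := by
          push_cast
          exact Finset.sum_le_sum fun i _ => by exact_mod_cast (hη i).2.2.le
      _ = ∑ i ∈ I, (ediam (t i) ^ s + e i) := by
          simp only [ha, ENNReal.coe_add, ENNReal.coe_rpow_of_nonneg _ hs.le]
      _ ≤ ∑' i, (ediam (t i) ^ s + e i) := ENNReal.sum_le_tsum I
      _ = ∑' i, ediam (t i) ^ s + ∑' i, (e i : ℝ≥0∞) := ENNReal.tsum_add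
      _ ≤ (b / 2 : ℝ≥0) + (b / 2 : ℝ≥0) := add_le_add hsum.le hesum.le
      _ = b := by norm_cast; exact add_halves b

lemma LipschitzWith.prod_subset_dynEntourage {X : Type*} [PseudoEMetricSpace X] {f : X → X}
    {K : ℝ≥0} (hf : LipschitzWith K f) {u : Set X} {d ε : ℝ≥0∞} {m : ℕ} (hu : ediam u ≤ d)
    (hm : ∀ k < m, (K : ℝ≥0∞) ^ k * d ≤ ε) :
    u ×ˢ u ⊆ dynEntourage f {p | edist p.1 p.2 ≤ ε} m := by
  rintro ⟨x, y⟩ ⟨hx, hy⟩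
  refine mem_dynEntourage.2 fun k hk => ?_
  calc edist (f^[k] x) (f^[k] y) ≤ (K : ℝ≥0∞) ^ k * edist x y := by
        simpa using (hf.iterate k).edist_le_mul x y
    _ ≤ (K : ℝ≥0∞) ^ k * d := by gcongr; exact (edist_le_ediam_of_mem hx hy).trans hu
    _ ≤ ε := hm k hk

lemma NNReal.exists_pow_mul_near {K d ε : ℝ≥0} (hK : 1 < K) (hd : 0 < d) (hdε : d ≤ ε) :
    ∃ m, 0 < m ∧ (∀ k < m, K ^ k * d ≤ ε) ∧ ε < K ^ m * d := by
  obtain ⟨n, hle, hlt⟩ := exists_nat_pow_near ((one_le_div hd).2 hdε) hK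
  refine ⟨n + 1, n.succ_pos, fun k hk => ?_, (div_lt_iff₀ hd).1 hlt⟩
  calc K ^ k * d ≤ K ^ n * d := by gcongr; exacts [hK.le, Nat.lt_succ_iff.1 hk]
    _ ≤ ε := (le_div_iff₀ hd).1 hle

theorem LipschitzWith.exists_dynEntourage_cover {X : Type*} [EMetricSpace X] [CompactSpace X]
    [MeasurableSpace X] [BorelSpace X] {f : X → X} {K : ℝ≥0} (hf : LipschitzWith K f)
    (hK : 1 < K) {s : ℝ} (hs : 0 < s) (hμ : μH[s] (univ : Set X) = 0) {ε : ℝ≥0} (hε : 0 < ε) :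
    ∃ (I : Finset ℕ) (u : ℕ → Set X) (m : ℕ → ℕ), univ ⊆ ⋃ i ∈ I, u i ∧
      (∀ i ∈ I, u i ×ˢ u i ⊆ dynEntourage f {p | edist p.1 p.2 ≤ ε} (m i)) ∧
      (∀ i ∈ I, 0 < m i) ∧ ∑ i ∈ I, ((K ^ s) ^ m i)⁻¹ ≤ 1 := by
  obtain ⟨I, u, d, hcover, hd, hsum⟩ :=
    exists_finite_isOpen_cover_sum_rpow_le hs isCompact_univ hμ hε (NNReal.rpow_pos hε)
  choose m hm using fun i => NNReal.exists_pow_mul_near hK (hd i).2.1 (hd i).2.2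
  refine ⟨I, u, m, hcover, fun i _ => hf.prod_subset_dynEntourage (hd i).1 fun k hk => ?_,
    fun i _ => (hm i).1, ?_⟩
  · exact_mod_cast (hm i).2.1 k hk
  have hweight (i : ℕ) : ((K ^ s) ^ m i)⁻¹ ≤ (d i / ε) ^ s := by
    rw [← NNReal.rpow_mul_natCast, mul_comm, NNReal.rpow_natCast_mul, ← inv_div,
      NNReal.inv_rpow]
    refine inv_anti₀ (NNReal.rpow_pos (div_pos hε (hd i).2.1)) ?_
    exact NNReal.rpow_le_rpow ((div_le_iff₀ (hd i).2.1).2 (hm i).2.2.le) hs.le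
  calc ∑ i ∈ I, ((K ^ s) ^ m i)⁻¹ ≤ ∑ i ∈ I, (d i / ε) ^ s :=
        Finset.sum_le_sum fun i _ => hweight i
    _ = (∑ i ∈ I, d i ^ s) / ε ^ s := by simp only [NNReal.div_rpow, Finset.sum_div]
    _ ≤ 1 := div_le_one_of_le₀ hsum zero_le

theorem LipschitzWith.coverEntropy_le_mul_log_of_hausdorffMeasure_eq_zero {X : Type*}
    [EMetricSpace X] [CompactSpace X] [MeasurableSpace X] [BorelSpace X] {f : X → X} {K : ℝ≥0}
    (hf : LipschitzWith K f) (hK : 1 < K) {s : ℝ} (hs : 0 < s)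
    (hμ : μH[s] (univ : Set X) = 0) :
    coverEntropy f univ ≤ (s * Real.log K : ℝ) := by
  rw [coverEntropy_eq_iSup_basis_netEntropyEntourage uniformity_basis_edist_nnreal_le]
  refine iSup₂_le fun ε hε => ?_
  obtain ⟨I, u, m, hcover, hsmall, hm, hweight⟩ := hf.exists_dynEntourage_cover hK hs hμ hε
  have := isRefl_of_mem_uniformity ((uniformity_basis_edist_nnreal_le (α := X)).mem_of_mem hε)
  calc netEntropyEntourage f univ {p | edist p.1 p.2 ≤ ε}
      ≤ Real.log (K ^ s : ℝ≥0) := netEntropyEntourage_le_log_of_card_le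
        (NNReal.rpow_pos (zero_lt_one.trans hK)).ne' fun n t ht => by
          rw [← pow_add, add_comm]
          exact ht.card_le_pow (NNReal.one_le_rpow hK.le hs.le) hcover hsmall hm hweight
    _ = (s * Real.log K : ℝ) := by
        rw [NNReal.coe_rpow, Real.log_rpow (NNReal.coe_pos.2 (zero_lt_one.trans hK))]

theorem LipschitzWith.coverEntropy_nonpos {X : Type*} [PseudoEMetricSpace X] [CompactSpace X]
    {f : X → X} {K : ℝ≥0} (hf : LipschitzWith K f) (hK : K ≤ 1) :
    coverEntropy f univ ≤ 0 := by
  rw [coverEntropy_eq_iSup_basis_netEntropyEntourage uniformity_basis_edist_nnreal_le]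
  refine iSup₂_le fun ε hε => ?_
  obtain ⟨I, hI⟩ := isCompact_univ.elim_finite_subcover (fun x : X => eball x (ε / 2 : ℝ≥0))
    (fun _ => isOpen_eball) fun x _ =>
      mem_iUnion.2 ⟨x, mem_eball_self (ENNReal.coe_pos.2 (half_pos hε))⟩
  have := isRefl_of_mem_uniformity ((uniformity_basis_edist_nnreal_le (α := X)).mem_of_mem hε)
  have hsmall : ∀ x ∈ I, ∀ n, eball x (ε / 2 : ℝ≥0) ×ˢ eball x (ε / 2 : ℝ≥0) ⊆
      dynEntourage f {p | edist p.1 p.2 ≤ ε} n := fun x _ n =>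
    hf.prod_subset_dynEntourage ediam_eball_le fun k _ => by
      calc (K : ℝ≥0∞) ^ k * (2 * (ε / 2 : ℝ≥0)) ≤ 1 * (2 * (ε / 2 : ℝ≥0)) := by
            gcongr; exact pow_le_one₀ zero_le (by exact_mod_cast hK)
        _ = ε := by
            rw [one_mul, ← ENNReal.coe_ofNat, ← ENNReal.coe_mul, mul_div_cancel₀ _ two_ne_zero]
  calc netEntropyEntourage f univ {p | edist p.1 p.2 ≤ ε}
      ≤ Real.log (1 : ℝ≥0) := netEntropyEntourage_le_log_of_card_le (C := I.card) one_ne_zero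
        fun n t ht => by simpa using ht.card_le_card_of_cover hI fun x hx => hsmall x hx n
    _ = 0 := by simp

theorem LipschitzWith.coverEntropy_le_dimH_mul_log {X : Type*} [EMetricSpace X] [CompactSpace X]
    {f : X → X} {K : ℝ≥0} (hf : LipschitzWith K f) (hK : 1 < K) :
    coverEntropy f univ ≤ (dimH (univ : Set X) : EReal) * (Real.log K : EReal) := by
  borelize X
  have hlog : 0 < Real.log K := Real.log_pos (by exact_mod_cast hK)
  rcases eq_top_or_lt_top (dimH (univ : Set X)) with htop | hfin
  · rw [htop, EReal.coe_ennreal_top, EReal.top_mul_of_pos (EReal.coe_pos.2 hlog)]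
    exact le_top
  set D := (dimH (univ : Set X)).toReal
  have hD : dimH (univ : Set X) = ENNReal.ofReal D := (ENNReal.ofReal_toReal hfin.ne).symm
  rw [hD, EReal.coe_ennreal_ofReal, max_eq_left ENNReal.toReal_nonneg, ← EReal.coe_mul]
  have hlim : Tendsto (fun s : ℝ => ((s * Real.log K : ℝ) : EReal)) (𝓝[>] D)
      (𝓝 ((D * Real.log K : ℝ) : EReal)) :=
    ((continuous_coe_real_ereal.comp (continuous_id.mul continuous_const)).tendsto D).mono_left
      nhdsWithin_le_nhds
  refine ge_of_tendsto hlim (eventually_nhdsWithin_of_forall fun s (hs : D < s) => ?_)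
  have hs0 : 0 < s := ENNReal.toReal_nonneg.trans_lt hs
  have hμ := hausdorffMeasure_of_dimH_lt (d := s.toNNReal)
    (hD ▸ (ENNReal.ofReal_lt_ofReal_iff hs0).2 hs)
  rw [Real.coe_toNNReal s hs0.le] at hμ
  exact hf.coverEntropy_le_mul_log_of_hausdorffMeasure_eq_zero hK hs0 hμ

/-- For a Lipschitz self-map `f` of a compact metric space `X` with Lipschitz
constant `K`, the topological entropy satisfies
`h_top(f) ≤ HD(X) · log⁺ K`. -/
theorem stmt11 {X : Type*} [MetricSpace X] [CompactSpace X]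
    (f : X → X) (K : ℝ≥0) (hK : LipschitzWith K f) :
    coverEntropy f Set.univ ≤
      ((dimH (Set.univ : Set X) : EReal)) * ((max (Real.log K) 0 : ℝ) : EReal) := by
  rcases le_or_gt K 1 with hK1 | hK1
  · rw [max_eq_right (Real.log_nonpos K.coe_nonneg (by exact_mod_cast hK1)), EReal.coe_zero,
      mul_zero]
    exact hK.coverEntropy_nonpos hK1
  · rw [max_eq_left (Real.log_pos (by exact_mod_cast hK1)).le]
    exact hK.coverEntropy_le_dimH_mul_log hK1
end

section
/- Let G be a continuum in which every point except countably many has a neighborhood homeomorphic to a finite graph. Then G is the union of countably many free arcs and a countable set of points. -/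
open unitInterval

def IsArcFrom {G : Type*} [TopologicalSpace G] (α : Set G) (x y : G) : Prop :=
  ∃ e : I → G, Continuous e ∧ Function.Injective e ∧ e 0 = x ∧ e 1 = y ∧ Set.range e = α

/-- `N` is a finite graph (as a subset): a finite union of arcs any two of which
meet only in endpoints. -/
def IsFiniteGraphSet {G : Type*} [TopologicalSpace G] (N : Set G) : Prop :=
  ∃ (k : ℕ) (a : Fin k → Set G) (p q : Fin k → G),
    (∀ i, IsArcFrom (a i) (p i) (q i)) ∧ N = ⋃ i, a i ∧
    ∀ i j, i ≠ j → a i ∩ a j ⊆ ({p i, q i} : Set G) ∩ {p j, q j}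

/-- A free arc: an arc whose interior (arc minus endpoints) is open in `G`. -/
def IsFreeArc {G : Type*} [TopologicalSpace G] (α : Set G) : Prop :=
  ∃ x y : G, IsArcFrom α x y ∧ IsOpen (α \ {x, y})

/-!
Away from its finitely many vertices a finite graph neighbourhood `N` is locally a single edge:
removing the other edges and the vertices from `interior N` leaves an open subset of one edge, and
a short subarc around any of its points has open interior, i.e. is a free arc. So outside `E` the
points not interior to a free arc form a locally finite, hence (by second countability) countable
set, while by the Lindelöf property countably many free arcs cover all the other points.
-/

open Set Topology

def freeArcPoints (G : Type*) [TopologicalSpace G] : Set G :=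
  {x | ∃ (α : Set G) (u v : G), IsArcFrom α u v ∧ IsOpen (α \ {u, v}) ∧ x ∈ α \ {u, v}}

section FreeArcs

variable {G : Type*} [TopologicalSpace G]

theorem IsArcFrom.isCompact {α : Set G} {p q : G} (hα : IsArcFrom α p q) : IsCompact α := by
  obtain ⟨e, he, -, -, -, rfl⟩ := hα
  exact isCompact_range he

theorem isArcFrom_image_Icc {g : ℝ → G} {c d : ℝ} (hcd : c < d) (hg : ContinuousOn g (Icc c d))
    (hinj : InjOn g (Icc c d)) : IsArcFrom (g '' Icc c d) (g c) (g d) := by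
  let φ := (iccHomeoI c d hcd).symm
  refine ⟨g ∘ Subtype.val ∘ φ, ?_, ?_, ?_, ?_, ?_⟩
  · exact hg.comp_continuous (continuous_subtype_val.comp φ.continuous) fun s => (φ s).2
  · exact fun s s' h => φ.injective (Subtype.ext (hinj (φ s).2 (φ s').2 h))
  · simp [φ]
  · simp [φ]
  · rw [range_comp, range_comp, φ.range_coe, image_univ, Subtype.range_coe]

theorem subset_freeArcPoints_of_subset_image_Icc [T2Space G] {g : ℝ → G} {c d : ℝ}
    (hg : ContinuousOn g (Icc c d)) (hinj : InjOn g (Icc c d)) {U : Set G} (hU : IsOpen U)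
    (hUg : U ⊆ g '' Icc c d) (hc : g c ∉ U) (hd : g d ∉ U) : U ⊆ freeArcPoints G := by
  intro y hy
  obtain ⟨t, htcd, rfl⟩ := hUg hy
  have ht : t ∈ Ioo c d := ⟨htcd.1.lt_of_ne (by rintro rfl; exact hc hy),
    htcd.2.lt_of_ne (by rintro rfl; exact hd hy)⟩
  have hnhds : g ⁻¹' U ∩ Ioo c d ∈ 𝓝 t :=
    Filter.inter_mem
      ((hg.continuousAt (Icc_mem_nhds ht.1 ht.2)).preimage_mem_nhds (hU.mem_nhds hy))
      (Ioo_mem_nhds ht.1 ht.2)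
  obtain ⟨a, b, hab, hsub⟩ := mem_nhds_iff_exists_Ioo_subset.mp hnhds
  have hab' : a < b := hab.1.trans hab.2
  have hIcc : Icc a b ⊆ Icc c d := by
    obtain ⟨hca, hbd⟩ := (Ioo_subset_Ioo_iff hab').mp (hsub.trans inter_subset_right)
    exact Icc_subset_Icc hca hbd
  have hends : g '' Icc a b \ {g a, g b} = g '' Ioo a b := by
    rw [← Icc_sdiff_both, (hinj.mono hIcc).image_sdiff,
      inter_eq_right.mpr (pair_subset (left_mem_Icc.mpr hab'.le) (right_mem_Icc.mpr hab'.le)),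
      image_pair]
  -- `U` lies in the arc `g '' Icc c d`, so inside `U` the open part `g '' Ioo a b` of the subarc
  -- is the complement of the compact image of the rest of `Icc c d`
  have hopen : g '' Ioo a b = U \ g '' (Icc c d \ Ioo a b) := by
    ext z
    constructor
    · rintro ⟨s, hs, rfl⟩
      refine ⟨(hsub hs).1, ?_⟩
      rintro ⟨s', hs', hgs⟩
      exact hs'.2 (hinj hs'.1 (hIcc (Ioo_subset_Icc_self hs)) hgs ▸ hs)
    · rintro ⟨hzU, hz⟩
      obtain ⟨s, hs, rfl⟩ := hUg hzU
      exact mem_image_of_mem g (not_not.mp fun h => hz (mem_image_of_mem g ⟨hs, h⟩))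
  refine ⟨g '' Icc a b, g a, g b, isArcFrom_image_Icc hab' (hg.mono hIcc) (hinj.mono hIcc), ?_, ?_⟩
  · rw [hends, hopen]
    exact hU.sdiff ((isCompact_Icc.diff isOpen_Ioo).image_of_continuousOn
      (hg.mono sdiff_subset)).isClosed
  · rw [hends]
    exact mem_image_of_mem g hab

theorem IsArcFrom.subset_freeArcPoints [T2Space G] {α : Set G} {p q : G}
    (hα : IsArcFrom α p q) {U : Set G} (hU : IsOpen U) (hUα : U ⊆ α) (hp : p ∉ U) (hq : q ∉ U) :
    U ⊆ freeArcPoints G := by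
  obtain ⟨e, he, hinj, rfl, rfl, rfl⟩ := hα
  refine subset_freeArcPoints_of_subset_image_Icc (g := IccExtend zero_le_one e)
    he.Icc_extend'.continuousOn ?_ hU ?_ (by rwa [IccExtend_left]) (by rwa [IccExtend_right])
  · intro s hs s' hs' h
    rw [IccExtend_of_mem _ e hs, IccExtend_of_mem _ e hs'] at h
    exact congrArg Subtype.val (hinj h)
  · rintro _ hz
    obtain ⟨t, rfl⟩ := hUα hz
    exact ⟨t, t.2, IccExtend_val _ e t⟩

theorem IsFiniteGraphSet.exists_finite_interior_diff_subset [T2Space G] {N : Set G}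
    (hN : IsFiniteGraphSet N) : ∃ F : Set G, F.Finite ∧ interior N \ F ⊆ freeArcPoints G := by
  obtain ⟨k, a, p, q, harc, rfl, hmeet⟩ := hN
  set F := range p ∪ range q
  have hF : F.Finite := (finite_range p).union (finite_range q)
  refine ⟨F, hF, ?_⟩
  rintro y ⟨hyN, hyF⟩
  obtain ⟨i, hyi⟩ := mem_iUnion.mp (interior_subset hyN)
  set K := (⋃ j ∈ ({i}ᶜ : Set (Fin k)), a j) ∪ F
  have hK : IsClosed K :=
    ((toFinite _).isClosed_biUnion fun j _ => (harc j).isCompact.isClosed).union hF.isClosed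
  have hedge : interior (⋃ j, a j) \ K ⊆ a i := by
    rintro z ⟨hzN, hzK⟩
    obtain ⟨j, hzj⟩ := mem_iUnion.mp (interior_subset hzN)
    obtain rfl : j = i := not_not.mp fun hji => hzK (Or.inl (mem_biUnion hji hzj))
    exact hzj
  have hyK : y ∉ K := by
    rintro (hy | hy)
    · obtain ⟨j, hji, hyj⟩ := mem_iUnion₂.mp hy
      rcases (hmeet i j (Ne.symm hji) ⟨hyi, hyj⟩).1 with h | h
      · exact hyF (Or.inl ⟨i, h.symm⟩)
      · exact hyF (Or.inr ⟨i, (mem_singleton_iff.mp h).symm⟩)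
    · exact hyF hy
  exact (harc i).subset_freeArcPoints (isOpen_interior.sdiff hK) hedge
    (fun h => h.2 (Or.inr (Or.inl ⟨i, rfl⟩))) (fun h => h.2 (Or.inr (Or.inr ⟨i, rfl⟩))) ⟨hyN, hyK⟩

theorem exists_countable_isFreeArc_cover [SecondCountableTopology G] :
    ∃ 𝒜 : Set (Set G), 𝒜.Countable ∧ (∀ α ∈ 𝒜, IsFreeArc α) ∧ freeArcPoints G ⊆ ⋃₀ 𝒜 := by
  obtain ⟨T, hTI, hTc, hT⟩ := TopologicalSpace.isOpen_biUnion_countable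
    {d : Set G × G × G | IsArcFrom d.1 d.2.1 d.2.2 ∧ IsOpen (d.1 \ {d.2.1, d.2.2})}
    (fun d => d.1 \ {d.2.1, d.2.2}) fun d hd => hd.2
  refine ⟨Prod.fst '' T, hTc.image _, ?_, ?_⟩
  · rintro _ ⟨d, hd, rfl⟩
    exact ⟨d.2.1, d.2.2, hTI hd⟩
  · rintro x ⟨α, u, v, harc, hopen, hx⟩
    have : x ∈ ⋃ d ∈ T, d.1 \ {d.2.1, d.2.2} := hT ▸ mem_biUnion (x := (α, u, v)) ⟨harc, hopen⟩ hx
    obtain ⟨d, hd, hxd⟩ := mem_iUnion₂.mp this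
    exact ⟨d.1, mem_image_of_mem _ hd, hxd.1⟩

end FreeArcs

theorem countable_of_forall_exists_mem_nhds_inter_finite {X : Type*} [TopologicalSpace X]
    [SecondCountableTopology X] {A : Set X} (h : ∀ x ∈ A, ∃ V ∈ 𝓝 x, (A ∩ V).Finite) :
    A.Countable := by
  choose! V hV hfin using h
  obtain ⟨t, htA, htc, hcover⟩ := TopologicalSpace.countable_cover_nhdsWithin
    (f := fun x => A ∩ V x) fun x hx => inter_mem_nhdsWithin A (hV x hx)
  exact (htc.biUnion fun x hx => (hfin x (htA hx)).countable).mono hcover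

theorem stmt19_general {G : Type*} [MetricSpace G] [CompactSpace G]
    (E : Set G) (hE : E.Countable)
    (hloc : ∀ x : G, x ∉ E → ∃ N ∈ nhds x, IsFiniteGraphSet N) :
    ∃ (𝒜 : Set (Set G)) (C : Set G), 𝒜.Countable ∧ C.Countable ∧
      (∀ α ∈ 𝒜, IsFreeArc α) ∧ (Set.univ : Set G) = ⋃₀ 𝒜 ∪ C := by
  obtain ⟨𝒜, h𝒜c, h𝒜free, h𝒜cover⟩ := exists_countable_isFreeArc_cover (G := G)
  have hrest : ((freeArcPoints G)ᶜ \ E).Countable := by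
    refine countable_of_forall_exists_mem_nhds_inter_finite fun x hx => ?_
    obtain ⟨N, hN, hNgraph⟩ := hloc x hx.2
    obtain ⟨F, hF, hNF⟩ := hNgraph.exists_finite_interior_diff_subset
    refine ⟨interior N, interior_mem_nhds.mpr hN, hF.subset fun z hz => ?_⟩
    exact not_not.mp fun hzF => hz.1.1 (hNF ⟨hz.2, hzF⟩)
  refine ⟨𝒜, (freeArcPoints G)ᶜ, h𝒜c, (hrest.union hE).mono (subset_sdiff_union _ _), h𝒜free, ?_⟩
  refine (eq_univ_of_forall fun x => ?_).symm
  by_cases hx : x ∈ freeArcPoints G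
  · exact Or.inl (h𝒜cover hx)
  · exact Or.inr hx

/-- If in a continuum `G` every point outside a countable set has a neighborhood
that is a finite graph, then `G` is the union of countably many free arcs and a
countable set of points. -/
theorem stmt19 {G : Type*} [MetricSpace G] [CompactSpace G] [ConnectedSpace G]
    [Nonempty G]
    (E : Set G) (hE : E.Countable)
    (hloc : ∀ x : G, x ∉ E → ∃ N ∈ nhds x, IsFiniteGraphSet N) :
    ∃ (𝒜 : Set (Set G)) (C : Set G), 𝒜.Countable ∧ C.Countable ∧
      (∀ α ∈ 𝒜, IsFreeArc α) ∧ (Set.univ : Set G) = ⋃₀ 𝒜 ∪ C :=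
  stmt19_general E hE hloc
end
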